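/- Let I ⊆ R be a monomial ideal with linear quotients with respect to the ordered generators G(I) = (m_1,…,m_k), and suppose its decomposition function b is regular. Then for every m ∈ G(I) and all s, t ∈ set(m) one has b(x_s · b(x_t · m)) = b(x_t · b(x_s · m)). -/

import Mathlib

open MvPolynomial

/-- The monomial ideal generated by a set of exponent vectors. -/
noncomputable def genIdeal (K : Type*) [Field K] {n : ℕ} (ms : Set (Fin n →₀ ℕ)) :
    Ideal (MvPolynomial (Fin n) K) :=
  Ideal.span ((fun u => MvPolynomial.monomial u (1 : K)) '' ms)

/-- The colon ideal `⟨m_1, …, m_{j-1}⟩ : m_j`. -/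
noncomputable def colonJ (K : Type*) [Field K] {n k : ℕ} (m : Fin k → (Fin n →₀ ℕ))
    (j : Fin k) : Ideal (MvPolynomial (Fin n) K) :=
  Submodule.colon (genIdeal K {u | ∃ i : Fin k, i < j ∧ u = m i})
    (Ideal.span {MvPolynomial.monomial (m j) (1 : K)})

/-- `I` has linear quotients w.r.t. the ordering `m_1,…,m_k` of its generators:
each colon ideal is generated by a subset of the variables. -/
def HasLinearQuotients (K : Type*) [Field K] {n k : ℕ}
    (m : Fin k → (Fin n →₀ ℕ)) : Prop :=
  ∀ j : Fin k, ∃ S : Set (Fin n),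
    colonJ K m j = Ideal.span ((fun s => (MvPolynomial.X s : MvPolynomial (Fin n) K)) '' S)

/-- `set(m_j) = {i : x_i ∈ ⟨m_1,…,m_{j-1}⟩ : m_j}`. -/
def mset (K : Type*) [Field K] {n k : ℕ} (m : Fin k → (Fin n →₀ ℕ)) (j : Fin k) :
    Set (Fin n) :=
  {t | (MvPolynomial.X t : MvPolynomial (Fin n) K) ∈ colonJ K m j}

/-- The `m i` are minimal monomial generators: none divides another. -/
def MinimalGens {n k : ℕ} (m : Fin k → (Fin n →₀ ℕ)) : Prop :=
  ∀ i j : Fin k, m i ≤ m j → i = j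

/-- `b` is the decomposition function: for a monomial `u ∈ I`, `b u` is the smallest
index `j` with `u ∈ ⟨m_1,…,m_j⟩`. -/
def IsDecompositionFunction (K : Type*) [Field K] {n k : ℕ}
    (m : Fin k → (Fin n →₀ ℕ)) (b : (Fin n →₀ ℕ) → Fin k) : Prop :=
  ∀ u : Fin n →₀ ℕ, MvPolynomial.monomial u (1 : K) ∈ genIdeal K (Set.range m) →
    (MvPolynomial.monomial u (1 : K) ∈ genIdeal K {v | ∃ i : Fin k, i ≤ b u ∧ v = m i}) ∧
    (∀ j : Fin k,
      MvPolynomial.monomial u (1 : K) ∈ genIdeal K {v | ∃ i : Fin k, i ≤ j ∧ v = m i} →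
      b u ≤ j)

/-- The decomposition function is regular: `set(b(x_t·m)) ⊆ set(m)` for every
generator `m` and every `t ∈ set(m)`. -/
def IsRegularDecomp (K : Type*) [Field K] {n k : ℕ}
    (m : Fin k → (Fin n →₀ ℕ)) (b : (Fin n →₀ ℕ) → Fin k) : Prop :=
  ∀ j : Fin k, ∀ t ∈ mset K m j,
    mset K m (b (m j + Finsupp.single t 1)) ⊆ mset K m j

/-!
The theorem follows from a stronger identity: for a regular decomposition function, every
monomial `u ∈ I` and every variable `x_s`, one has `b(x_s · b(u)) = b(x_s · u)`; applying it to
`u = x_t m` and `u = x_s m` gives two expressions for `b(x_s x_t m)`.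

The inequality `b(x_s u) ≤ b(x_s · b(u))` is clear since `b(u)` divides `u`. Conversely, write
`u = b(u) · w`; no `x_r` with `r ∈ set(b(u))` divides `w`, by minimality of `b(u)`. If
`b(x_s u) < b(x_s · b(u)) ≤ b(u)`, linear quotients at `b(u)` put a variable of `w x_s` into
`set(b(u))`, which forces `s ∈ set(b(u))`. Regularity then gives `set(b(x_s · b(u))) ⊆ set(b(u))`,
and linear quotients at `b(x_s · b(u))` produce a variable of `x_s u / b(x_s · b(u))` in that set,
contradicting minimality either of `b(x_s · b(u))` or of `b(u)`.
-/

section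

variable {K : Type*} [Field K] {n k : ℕ} {m : Fin k → (Fin n →₀ ℕ)}

theorem monomial_mem_genIdeal_iff (S : Set (Fin n →₀ ℕ)) (u : Fin n →₀ ℕ) :
    monomial u (1 : K) ∈ genIdeal K S ↔ ∃ v ∈ S, v ≤ u := by
  rw [genIdeal, mem_ideal_span_monomial_image]
  simp

theorem monomial_mem_colonJ_iff (j : Fin k) (v : Fin n →₀ ℕ) :
    monomial v (1 : K) ∈ colonJ K m j ↔ ∃ i < j, m i ≤ v + m j := by
  rw [colonJ, Ideal.mem_colon_span_singleton, monomial_mul, one_mul, monomial_mem_genIdeal_iff]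
  constructor
  · rintro ⟨_, ⟨i, hi, rfl⟩, hle⟩
    exact ⟨i, hi, hle⟩
  · rintro ⟨i, hi, hle⟩
    exact ⟨m i, ⟨i, hi, rfl⟩, hle⟩

theorem mem_mset_iff {j : Fin k} {t : Fin n} :
    t ∈ mset K m j ↔ ∃ i < j, m i ≤ m j + Finsupp.single t 1 := by
  rw [mset, Set.mem_ofPred_eq, X, monomial_mem_colonJ_iff]
  simp only [add_comm]

theorem HasLinearQuotients.exists_mem_mset (hlq : HasLinearQuotients K m) {j : Fin k}
    {v : Fin n →₀ ℕ} (h : ∃ i < j, m i ≤ v + m j) :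
    ∃ r ∈ mset K m j, v r ≠ 0 := by
  obtain ⟨S, hS⟩ := hlq j
  have hv : monomial v (1 : K) ∈ colonJ K m j := (monomial_mem_colonJ_iff j v).2 h
  rw [hS, mem_ideal_span_X_image] at hv
  obtain ⟨r, hrS, hr⟩ := hv v (by simp)
  refine ⟨r, ?_, hr⟩
  change X r ∈ colonJ K m j
  rw [hS]
  exact Ideal.subset_span ⟨r, hrS, rfl⟩

namespace IsDecompositionFunction

variable {b : (Fin n →₀ ℕ) → Fin k} (hb : IsDecompositionFunction K m b)
include hb

theorem le_of_le {u : Fin n →₀ ℕ} {i : Fin k} (h : m i ≤ u) : b u ≤ i :=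
  (hb u ((monomial_mem_genIdeal_iff _ u).2 ⟨m i, ⟨i, rfl⟩, h⟩)).2 i
    ((monomial_mem_genIdeal_iff _ u).2 ⟨m i, ⟨i, le_rfl, rfl⟩, h⟩)

theorem apply_le {u : Fin n →₀ ℕ} {i : Fin k} (h : m i ≤ u) : m (b u) ≤ u := by
  obtain ⟨_, ⟨i', hi', rfl⟩, hle⟩ := (monomial_mem_genIdeal_iff _ u).1
    (hb u ((monomial_mem_genIdeal_iff _ u).2 ⟨m i, ⟨i, rfl⟩, h⟩)).1
  rwa [le_antisymm (hb.le_of_le hle) hi']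

theorem sub_apply_eq_zero_of_mem_mset {u : Fin n →₀ ℕ} {i : Fin k} (hu : m i ≤ u) {r : Fin n}
    (hr : r ∈ mset K m (b u)) : (u - m (b u)) r = 0 := by
  obtain ⟨i', hi', hle⟩ := mem_mset_iff.1 hr
  by_contra hne
  have hdvd : m (b u) + Finsupp.single r 1 ≤ u := by
    calc m (b u) + Finsupp.single r 1 ≤ m (b u) + (u - m (b u)) := by
          gcongr
          rw [Finsupp.single_le_iff]
          omega
      _ = u := add_tsub_cancel_of_le (hb.apply_le hu)
  exact (hb.le_of_le (hle.trans hdvd)).not_gt hi'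

theorem exists_mem_mset_of_lt (hlq : HasLinearQuotients K m) {u : Fin n →₀ ℕ} {j : Fin k}
    (hj : m j ≤ u) (hlt : b u < j) : ∃ r ∈ mset K m j, (u - m j) r ≠ 0 :=
  hlq.exists_mem_mset ⟨b u, hlt, by rw [tsub_add_cancel_of_le hj]; exact hb.apply_le hj⟩

end IsDecompositionFunction

theorem IsRegularDecomp.apply_add_single_le {b : (Fin n →₀ ℕ) → Fin k}
    (hreg : IsRegularDecomp K m b) (hlq : HasLinearQuotients K m)
    (hb : IsDecompositionFunction K m b) {u : Fin n →₀ ℕ} {i : Fin k} (hu : m i ≤ u) (s : Fin n) :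
    b (m (b u) + Finsupp.single s 1) ≤ b (u + Finsupp.single s 1) := by
  set j₁ := b u
  set j₂ := b (m j₁ + Finsupp.single s 1)
  have hj₁ : m j₁ ≤ u := hb.apply_le hu
  have hj₂ : m j₂ ≤ m j₁ + Finsupp.single s 1 := hb.apply_le le_self_add
  by_contra! hlt
  have hs : s ∈ mset K m j₁ := by
    have hlt₁ : b (u + Finsupp.single s 1) < j₁ := hlt.trans_le (hb.le_of_le le_self_add)
    obtain ⟨r, hr, hne⟩ := hb.exists_mem_mset_of_lt hlq (le_add_right hj₁) hlt₁
    have hw : (u - m j₁) r = 0 := hb.sub_apply_eq_zero_of_mem_mset hu hr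
    simp only [Finsupp.tsub_apply, Finsupp.add_apply] at hne hw
    obtain ⟨rfl, -⟩ := Finsupp.single_apply_ne_zero.1 (show Finsupp.single s 1 r ≠ 0 by omega)
    exact hr
  obtain ⟨r, hr, hne⟩ := hb.exists_mem_mset_of_lt hlq (hj₂.trans (by gcongr)) hlt
  have hw₂ : (m j₁ + Finsupp.single s 1 - m j₂ : Fin n →₀ ℕ) r = 0 :=
    hb.sub_apply_eq_zero_of_mem_mset le_self_add hr
  have hw : (u - m j₁) r = 0 := hb.sub_apply_eq_zero_of_mem_mset hu (hreg j₁ s hs hr)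
  simp only [Finsupp.tsub_apply, Finsupp.add_apply] at hne hw hw₂
  omega

theorem IsRegularDecomp.apply_add_single {b : (Fin n →₀ ℕ) → Fin k}
    (hreg : IsRegularDecomp K m b) (hlq : HasLinearQuotients K m)
    (hb : IsDecompositionFunction K m b) {u : Fin n →₀ ℕ} {i : Fin k} (hu : m i ≤ u) (s : Fin n) :
    b (m (b u) + Finsupp.single s 1) = b (u + Finsupp.single s 1) :=
  le_antisymm (hreg.apply_add_single_le hlq hb hu s)
    (hb.le_of_le ((hb.apply_le le_self_add).trans (by gcongr; exact hb.apply_le hu)))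

end

theorem stmt0_general (K : Type*) [Field K] {n k : ℕ} (m : Fin k → (Fin n →₀ ℕ))
    (hlq : HasLinearQuotients K m)
    (b : (Fin n →₀ ℕ) → Fin k) (hb : IsDecompositionFunction K m b)
    (hreg : IsRegularDecomp K m b)
    (j : Fin k) (s t : Fin n) :
    m (b (m (b (m j + Finsupp.single t 1)) + Finsupp.single s 1)) =
      m (b (m (b (m j + Finsupp.single s 1)) + Finsupp.single t 1)) := by
  rw [hreg.apply_add_single hlq hb le_self_add,
    hreg.apply_add_single hlq hb le_self_add, add_right_comm]

/-- if `I` has linear quotients and a regular decomposition function `b`,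
then `b(x_s · b(x_t · m)) = b(x_t · b(x_s · m))` for all `m ∈ G(I)` and `s, t ∈ set(m)`. -/
theorem stmt0 (K : Type*) [Field K] {n k : ℕ} (m : Fin k → (Fin n →₀ ℕ))
    (hmin : MinimalGens m) (hlq : HasLinearQuotients K m)
    (b : (Fin n →₀ ℕ) → Fin k) (hb : IsDecompositionFunction K m b)
    (hreg : IsRegularDecomp K m b)
    (j : Fin k) (s t : Fin n) (hs : s ∈ mset K m j) (ht : t ∈ mset K m j) :
    m (b (m (b (m j + Finsupp.single t 1)) + Finsupp.single s 1)) =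
      m (b (m (b (m j + Finsupp.single s 1)) + Finsupp.single t 1)) :=
  stmt0_general K m hlq b hb hreg j s t
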